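/- arXiv:2206.05088 — 6 statements merged into one kernel-verified Lean document; each statement's English description precedes it below -/
import Mathlib

section
/- Let d ≥ 1, let H ∈ ℝ^{d×d} be symmetric, let M ∈ ℝ^{d×d}, set Q := H M and G := Qᵀ + Q − Mᵀ H M. Then for all v, ṽ, w ∈ ℝ^d, with v⁺ := v − M(v − ṽ), one has (w − ṽ)ᵀ Q (v − ṽ) = (1/2)(‖v⁺ − w‖²_H − ‖v − w‖²_H) + (1/2)‖v − ṽ‖²_G. -/
/-!
Write `a = v - ṽ`, `b = v - w` and `c = M a`, so that `w - ṽ = a - b` and `v⁺ - w = b - c`.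
Expanding the symmetric form `H` gives `‖b - c‖²_H - ‖b‖²_H = ‖c‖²_H - 2 bᵀHc`, while
`‖a‖²_G = 2 aᵀHc - ‖c‖²_H`; the `‖c‖²_H` terms cancel and `(a - b)ᵀHc` remains.
-/

open Matrix

/-- `qf D w = wᵀ D w`, the (possibly indefinite) quadratic form `‖w‖²_D`. -/
noncomputable def qf {m : Type*} [Fintype m] (D : Matrix m m ℝ) (w : m → ℝ) : ℝ :=
  w ⬝ᵥ D.mulVec w

section QuadraticForm

variable {m : Type*} [Fintype m]

theorem add_qf (A B : Matrix m m ℝ) (w : m → ℝ) : qf (A + B) w = qf A w + qf B w := by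
  simp only [qf, add_mulVec, dotProduct_add]

theorem sub_qf (A B : Matrix m m ℝ) (w : m → ℝ) : qf (A - B) w = qf A w - qf B w := by
  simp only [qf, sub_mulVec, dotProduct_sub]

theorem qf_transpose (D : Matrix m m ℝ) (w : m → ℝ) : qf Dᵀ w = qf D w := by
  rw [qf, mulVec_transpose, dotProduct_comm, ← dotProduct_mulVec, qf]

theorem qf_transpose_mul_mul (D M : Matrix m m ℝ) (w : m → ℝ) :
    qf (Mᵀ * D * M) w = qf D (M *ᵥ w) := by
  rw [qf, qf, ← mulVec_mulVec, ← mulVec_mulVec, dotProduct_mulVec, vecMul_transpose]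

theorem qf_mul (D M : Matrix m m ℝ) (w : m → ℝ) : qf (D * M) w = w ⬝ᵥ D *ᵥ (M *ᵥ w) := by
  rw [qf, mulVec_mulVec]

theorem qf_sub_of_isSymm {D : Matrix m m ℝ} (hD : D.IsSymm) (x y : m → ℝ) :
    qf D (x - y) = qf D x - 2 * (x ⬝ᵥ D *ᵥ y) + qf D y := by
  have hswap : y ⬝ᵥ D *ᵥ x = x ⬝ᵥ D *ᵥ y := by
    rw [dotProduct_mulVec, ← mulVec_transpose, hD.eq, dotProduct_comm]
  simp only [qf, mulVec_sub, dotProduct_sub, sub_dotProduct, hswap]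
  ring

end QuadraticForm

theorem stmt0_general {d : ℕ}
    (H M : Matrix (Fin d) (Fin d) ℝ) (hH : H.IsSymm)
    (Q G : Matrix (Fin d) (Fin d) ℝ)
    (hQ : Q = H * M) (hG : G = Qᵀ + Q - Mᵀ * H * M) :
    ∀ v vt w : Fin d → ℝ,
      (w - vt) ⬝ᵥ Q.mulVec (v - vt) =
        (1 / 2) * (qf H ((v - M.mulVec (v - vt)) - w) - qf H (v - w))
          + (1 / 2) * qf G (v - vt) := by
  subst hQ hG
  intro v vt w
  have hprediction : w - vt = (v - vt) - (v - w) := by abel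
  have hcorrection : (v - M *ᵥ (v - vt)) - w = (v - w) - M *ᵥ (v - vt) := by abel
  rw [hprediction, hcorrection, qf_sub_of_isSymm hH, sub_qf, add_qf, qf_transpose,
    qf_transpose_mul_mul, qf_mul, ← mulVec_mulVec, sub_dotProduct]
  ring

/-- Key algebraic identity behind Lemma 2.2: with `Q = HM`,
`G = Qᵀ + Q - MᵀHM` and the correction step `v⁺ = v - M(v - ṽ)`,
`(w - ṽ)ᵀ Q (v - ṽ) = ½(‖v⁺ - w‖²_H - ‖v - w‖²_H) + ½‖v - ṽ‖²_G`. -/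
theorem stmt0 {d : ℕ} (hd : 1 ≤ d)
    (H M : Matrix (Fin d) (Fin d) ℝ) (hH : H.IsSymm)
    (Q G : Matrix (Fin d) (Fin d) ℝ)
    (hQ : Q = H * M) (hG : G = Qᵀ + Q - Mᵀ * H * M) :
    ∀ v vt w : Fin d → ℝ,
      (w - vt) ⬝ᵥ Q.mulVec (v - vt) =
        (1 / 2) * (qf H ((v - M.mulVec (v - vt)) - w) - qf H (v - w))
          + (1 / 2) * qf G (v - vt) :=
  stmt0_general H M hH Q G hQ hG
end

section
/- Let f : ℝⁿ → ℝ be convex, A ∈ ℝ^{l×n}, b ∈ ℝ^l, x' ∈ ℝⁿ with A x' = b, and λ ∈ ℝ^l. Let d ≥ 1, K ≥ 0, and for k = 0, …, K+1 let v^k ∈ ℝ^d, H₀^k ∈ ℝ^{d×d} be symmetric positive semidefinite, and Θ^k ≥ 0; let v' ∈ ℝ^d, and for k = 0, …, K let r^k > 0 and x̃^k ∈ ℝⁿ. Suppose that for each k = 0, …, K: r^k ( f(x') − f(x̃^k) + λᵀ(A x̃^k − b) ) ≥ (1/2)( ‖v^{k+1} − v'‖²_{H₀^{k+1}} − ‖v^k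 − v'‖²_{H₀^k} + Θ^{k+1} − Θ^k ). Then, with X̃^K := (Σ_{k=0}^K r^k x̃^k) / (Σ_{k=0}^K r^k), one has f(X̃^K) − f(x') − λᵀ(A X̃^K − b) ≤ ( ‖v^0 − v'‖²_{H₀^0} + Θ^0 ) / ( 2 Σ_{k=0}^K r^k ). -/
/-! Summing the per-iteration inequality telescopes the energies `‖vᵏ - v'‖²_{H₀ᵏ} + Θᵏ`;
since the last one is nonnegative, the `rᵏ`-weighted sum of the Lagrangian gaps
`f(x̃ᵏ) - f(x') - λᵀ(Ax̃ᵏ - b)` is at most half the initial energy. The gap is convex in `x̃`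
(a convex function minus an affine one), so Jensen's inequality at the ergodic mean `X̃ᴷ`
bounds it by that weighted sum divided by `Σ rᵏ`. -/

open Matrix

open Finset

theorem neg_le_sum_range_of_sub_le {a c : ℕ → ℝ} {K : ℕ}
    (h : ∀ k ≤ K, a (k + 1) - a k ≤ c k) (ha : 0 ≤ a (K + 1)) :
    -a 0 ≤ ∑ k ∈ range (K + 1), c k := by
  have hsum := sum_le_sum fun k hk => h k (Nat.lt_succ_iff.mp (mem_range.mp hk))
  rw [sum_range_sub] at hsum
  linarith

theorem ConvexOn.sub_const_sub_dotProduct_mulVec_sub {m n : Type*} [Fintype m] [Fintype n]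
    {s : Set (n → ℝ)} {f : (n → ℝ) → ℝ} (hf : ConvexOn ℝ s f) (c : ℝ) (lam : m → ℝ)
    (A : Matrix m n ℝ) (b : m → ℝ) :
    ConvexOn ℝ s fun x => f x - c - lam ⬝ᵥ (A *ᵥ x - b) := by
  let ℓ : (n → ℝ) →ₗ[ℝ] ℝ := dotProductBilin ℝ ℝ lam ∘ₗ A.mulVecLin
  refine ((hf.sub (ℓ.concaveOn hf.1)).add_const (lam ⬝ᵥ b - c)).congr fun x _ => ?_
  simp only [ℓ, LinearMap.coe_comp, Pi.add_apply, Pi.sub_apply, Function.comp_apply,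
    mulVecBilin_apply, dotProductBilin_apply_apply, dotProduct_sub]
  ring

theorem ConvexOn.map_centerMass_le_div {ι E : Type*} [AddCommGroup E] [Module ℝ E]
    {s : Set E} {φ : E → ℝ} (hφ : ConvexOn ℝ s φ) {t : Finset ι} {w : ι → ℝ} {p : ι → E}
    (h₀ : ∀ i ∈ t, 0 ≤ w i) (h₁ : 0 < ∑ i ∈ t, w i) (hmem : ∀ i ∈ t, p i ∈ s) {B : ℝ}
    (hB : ∑ i ∈ t, w i * φ (p i) ≤ B) :
    φ (t.centerMass w p) ≤ B / ∑ i ∈ t, w i :=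
  calc φ (t.centerMass w p)
      ≤ t.centerMass w (φ ∘ p) := hφ.map_centerMass_le h₀ h₁ hmem
    _ = (∑ i ∈ t, w i * φ (p i)) / ∑ i ∈ t, w i := by
      simp only [centerMass, Function.comp_apply, smul_eq_mul, inv_mul_eq_div]
    _ ≤ B / ∑ i ∈ t, w i := div_le_div_of_nonneg_right hB h₁.le

theorem stmt2_general {n l d : ℕ}
    (f : (Fin n → ℝ) → ℝ) (hf : ConvexOn ℝ Set.univ f)
    (A : Matrix (Fin l) (Fin n) ℝ) (b : Fin l → ℝ)
    (x' : Fin n → ℝ) (lam : Fin l → ℝ)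
    (K : ℕ)
    (v : ℕ → Fin d → ℝ) (H0 : ℕ → Matrix (Fin d) (Fin d) ℝ) (Θ : ℕ → ℝ)
    (hH0 : ∀ k ≤ K + 1, (H0 k).PosSemidef)
    (hΘ : ∀ k ≤ K + 1, 0 ≤ Θ k)
    (v' : Fin d → ℝ)
    (r : ℕ → ℝ) (hr : ∀ k ≤ K, 0 < r k)
    (xt : ℕ → Fin n → ℝ)
    (hstep : ∀ k ≤ K,
      r k * (f x' - f (xt k) + lam ⬝ᵥ (A.mulVec (xt k) - b))
        ≥ (1 / 2) * (qf (H0 (k + 1)) (v (k + 1) - v') - qf (H0 k) (v k - v')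
            + Θ (k + 1) - Θ k)) :
    f ((∑ k ∈ Finset.range (K + 1), r k)⁻¹ • ∑ k ∈ Finset.range (K + 1), r k • xt k)
      - f x'
      - lam ⬝ᵥ (A.mulVec ((∑ k ∈ Finset.range (K + 1), r k)⁻¹ •
          ∑ k ∈ Finset.range (K + 1), r k • xt k) - b)
      ≤ (qf (H0 0) (v 0 - v') + Θ 0) / (2 * ∑ k ∈ Finset.range (K + 1), r k) := by
  set gap := fun x => f x - f x' - lam ⬝ᵥ (A *ᵥ x - b)
  have hr₀ : ∀ k ∈ range (K + 1), 0 < r k := fun k hk =>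
    hr k (Nat.lt_succ_iff.mp (mem_range.mp hk))
  have hweighted : ∑ k ∈ range (K + 1), r k * gap (xt k) ≤ (qf (H0 0) (v 0 - v') + Θ 0) / 2 := by
    have hlast : 0 ≤ (qf (H0 (K + 1)) (v (K + 1) - v') + Θ (K + 1)) / 2 :=
      div_nonneg (add_nonneg ((hH0 (K + 1) le_rfl).dotProduct_mulVec_nonneg _)
        (hΘ (K + 1) le_rfl)) zero_le_two
    have htelescoped := neg_le_sum_range_of_sub_le
      (a := fun k => (qf (H0 k) (v k - v') + Θ k) / 2) (c := fun k => -(r k * gap (xt k)))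
      (fun k hk => by have := hstep k hk; simp only [gap]; linarith) hlast
    rw [sum_neg_distrib] at htelescoped
    linarith
  have hjensen := (hf.sub_const_sub_dotProduct_mulVec_sub (f x') lam A b).map_centerMass_le_div
    (fun k hk => (hr₀ k hk).le) (sum_pos hr₀ nonempty_range_add_one)
    (fun _ _ => Set.mem_univ _) hweighted
  rwa [div_div] at hjensen

/-- Theorem 2.3: summing the per-iteration inequality of the generalized
prediction-correction framework and applying Jensen's inequality yields the
ergodic bound `f(X̃ᴷ) - f(x') - λᵀ(AX̃ᴷ - b) ≤ (‖v⁰ - v'‖²_{H₀⁰} + Θ⁰) / (2 Σ rᵏ)`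
where `X̃ᴷ = (Σ rᵏ x̃ᵏ)/(Σ rᵏ)`. -/
theorem stmt2 {n l d : ℕ} (hd : 1 ≤ d)
    (f : (Fin n → ℝ) → ℝ) (hf : ConvexOn ℝ Set.univ f)
    (A : Matrix (Fin l) (Fin n) ℝ) (b : Fin l → ℝ)
    (x' : Fin n → ℝ) (hx' : A.mulVec x' = b) (lam : Fin l → ℝ)
    (K : ℕ)
    (v : ℕ → Fin d → ℝ) (H0 : ℕ → Matrix (Fin d) (Fin d) ℝ) (Θ : ℕ → ℝ)
    (hH0 : ∀ k ≤ K + 1, (H0 k).PosSemidef)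
    (hΘ : ∀ k ≤ K + 1, 0 ≤ Θ k)
    (v' : Fin d → ℝ)
    (r : ℕ → ℝ) (hr : ∀ k ≤ K, 0 < r k)
    (xt : ℕ → Fin n → ℝ)
    (hstep : ∀ k ≤ K,
      r k * (f x' - f (xt k) + lam ⬝ᵥ (A.mulVec (xt k) - b))
        ≥ (1 / 2) * (qf (H0 (k + 1)) (v (k + 1) - v') - qf (H0 k) (v k - v')
            + Θ (k + 1) - Θ k)) :
    f ((∑ k ∈ Finset.range (K + 1), r k)⁻¹ • ∑ k ∈ Finset.range (K + 1), r k • xt k)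
      - f x'
      - lam ⬝ᵥ (A.mulVec ((∑ k ∈ Finset.range (K + 1), r k)⁻¹ •
          ∑ k ∈ Finset.range (K + 1), r k • xt k) - b)
      ≤ (qf (H0 0) (v 0 - v') + Θ 0) / (2 * ∑ k ∈ Finset.range (K + 1), r k) :=
  stmt2_general f hf A b x' lam K v H0 Θ hH0 hΘ v' r hr xt hstep
end

section
/- Let f : ℝⁿ → ℝ, A ∈ ℝ^{l×n}, b ∈ ℝ^l, β > 0, σ ≥ 0, let D ∈ ℝ^{n×n} be symmetric, and let λ^k ∈ ℝ^l and x^k, x^{k+1} ∈ ℝⁿ. Assume the first-order optimality inequality of the GPALM x-subproblem: for all x ∈ ℝⁿ, f(x) − f(x^{k+1}) + (x − x^{k+1})ᵀ[ −Aᵀλ^k + β Aᵀ(A x^{k+1} − b) + D(x^{k+1} − x^k) ] ≥ (σ/2)‖x^{k+1} − x‖². Set x̃ := x^{k+1} and λ̃ := λ^k − β(A x̃ − b). Then for all (x, λ) ∈ ℝⁿ × ℝ^l: f(x) − f(x̃) + (x − x̃)ᵀ(−Aᵀλ̃) + (λ − λ̃)ᵀ(A x̃ − b) ≥ (x − x̃)ᵀ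 D (x^k − x̃) + (1/β)(λ − λ̃)ᵀ(λ^k − λ̃) + (σ/2)‖x̃ − x‖². -/
open Matrix

/- With `λ̃ = λᵏ - β(Ax̃ - b)`, the multiplier part `-Aᵀλᵏ + βAᵀ(Ax̃ - b)` of the subproblem's
optimality condition is exactly `-Aᵀλ̃`, and the residual is `Ax̃ - b = (1/β)(λᵏ - λ̃)`.
Substituting both, the optimality inequality in `x` becomes the `x`-row of the prediction
inequality, and the `λ`-row holds with equality. -/

section DualUpdate

variable {R 𝕜 : Type*} {m n : Type*} [Fintype m]

theorem neg_transpose_mulVec_add_smul_residual [CommRing R] [Fintype n]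
    (A : Matrix m n R) (b : m → R) (β : R) (lamk : m → R) (x : n → R) :
    -(Aᵀ *ᵥ lamk) + β • Aᵀ *ᵥ (A *ᵥ x - b) = -(Aᵀ *ᵥ (lamk - β • (A *ᵥ x - b))) := by
  rw [mulVec_sub _ lamk, mulVec_smul]
  abel

theorem dotProduct_residual_eq_inv_mul_dotProduct_sub_dualUpdate [Field 𝕜]
    {β : 𝕜} (hβ : β ≠ 0) (lamk r v : m → 𝕜) :
    v ⬝ᵥ r = 1 / β * (v ⬝ᵥ (lamk - (lamk - β • r))) := by
  rw [sub_sub_cancel, dotProduct_smul, smul_eq_mul, ← mul_assoc, one_div_mul_cancel hβ, one_mul]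

end DualUpdate

theorem stmt4_general {n l : ℕ}
    (f : (Fin n → ℝ) → ℝ) (A : Matrix (Fin l) (Fin n) ℝ) (b : Fin l → ℝ)
    (β σ : ℝ) (hβ : 0 < β)
    (D : Matrix (Fin n) (Fin n) ℝ)
    (lamk : Fin l → ℝ) (xk xkk : Fin n → ℝ)
    (hopt : ∀ x : Fin n → ℝ,
      f x - f xkk + (x - xkk) ⬝ᵥ
          (-(Aᵀ.mulVec lamk) + β • Aᵀ.mulVec (A.mulVec xkk - b) + D.mulVec (xkk - xk))
        ≥ σ / 2 * ((xkk - x) ⬝ᵥ (xkk - x)))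
    (xt : Fin n → ℝ) (lamt : Fin l → ℝ)
    (hxt : xt = xkk) (hlamt : lamt = lamk - β • (A.mulVec xt - b)) :
    ∀ (x : Fin n → ℝ) (lam : Fin l → ℝ),
      f x - f xt + (x - xt) ⬝ᵥ (-(Aᵀ.mulVec lamt)) + (lam - lamt) ⬝ᵥ (A.mulVec xt - b)
        ≥ (x - xt) ⬝ᵥ D.mulVec (xk - xt)
          + (1 / β) * ((lam - lamt) ⬝ᵥ (lamk - lamt))
          + σ / 2 * ((xt - x) ⬝ᵥ (xt - x)) := by
  intro x lam
  subst hxt hlamt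
  have hprimal := hopt x
  rw [neg_transpose_mulVec_add_smul_residual, dotProduct_add] at hprimal
  have hproximal : (x - xt) ⬝ᵥ D *ᵥ (xt - xk) = -((x - xt) ⬝ᵥ D *ᵥ (xk - xt)) := by
    rw [← neg_sub xk, mulVec_neg, dotProduct_neg]
  rw [← dotProduct_residual_eq_inv_mul_dotProduct_sub_dualUpdate hβ.ne']
  linarith

/-- The GPALM iteration satisfies the generalized prediction step: from the
first-order optimality inequality of the `x`-subproblem, with `x̃ = x^{k+1}`
and `λ̃ = λᵏ - β(Ax̃ - b)`, the prediction inequality holds with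
`Q = blockdiag(D, (1/β)I_l)`. -/
theorem stmt4 {n l : ℕ}
    (f : (Fin n → ℝ) → ℝ) (A : Matrix (Fin l) (Fin n) ℝ) (b : Fin l → ℝ)
    (β σ : ℝ) (hβ : 0 < β) (hσ : 0 ≤ σ)
    (D : Matrix (Fin n) (Fin n) ℝ) (hD : D.IsSymm)
    (lamk : Fin l → ℝ) (xk xkk : Fin n → ℝ)
    (hopt : ∀ x : Fin n → ℝ,
      f x - f xkk + (x - xkk) ⬝ᵥ
          (-(Aᵀ.mulVec lamk) + β • Aᵀ.mulVec (A.mulVec xkk - b) + D.mulVec (xkk - xk))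
        ≥ σ / 2 * ((xkk - x) ⬝ᵥ (xkk - x)))
    (xt : Fin n → ℝ) (lamt : Fin l → ℝ)
    (hxt : xt = xkk) (hlamt : lamt = lamk - β • (A.mulVec xt - b)) :
    ∀ (x : Fin n → ℝ) (lam : Fin l → ℝ),
      f x - f xt + (x - xt) ⬝ᵥ (-(Aᵀ.mulVec lamt)) + (lam - lamt) ⬝ᵥ (A.mulVec xt - b)
        ≥ (x - xt) ⬝ᵥ D.mulVec (xk - xt)
          + (1 / β) * ((lam - lamt) ⬝ᵥ (lamk - lamt))
          + σ / 2 * ((xt - x) ⬝ᵥ (xt - x)) :=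
  stmt4_general f A b β σ hβ D lamk xk xkk hopt xt lamt hxt hlamt
end

section
/- Let A ∈ ℝ^{l×n}, b ∈ ℝ^l, γ ∈ (0, 2], τ ∈ [(2+γ)/4, 1], σ > 0, and r > σ_max(AᵀA). Let β, β⁺ > 0 satisfy β ≤ β⁺ and β(τ r β + σ) ≥ τ r (β⁺)². Let x', x^k, x^{k+1} ∈ ℝⁿ with A x' = b, and λ, λ^k ∈ ℝ^l. Define λ̃ := λ^k − β(A x^{k+1} − b), λ^{k+1} := λ^k − γβ(A x^{k+1} − b), D := τ r β I_n − β AᵀA, H := blockdiag(D, (1/(γβ)) I_l), G := blockdiag(D, ((2 − γ)/β) I_l), and for s > 0 set H₀(s) := blockdiag( s²(τ r I_n + (1 − 2τ) AᵀA), (1/γ) I_l ). Set v^k := (x^k, λ^k), v^{k+1} := (x^{k+1}, λ^{k+1}), ṽ := (x^{k+1}, λ̃), v' := (x', λ). Then β( ‖v^{k+1} − v'‖²_H + σ‖x^{k+1} − x'‖² − ‖v^k − v'‖²_H + ‖v^k − ṽ‖²_G ) ≥ ‖v^{k+1} − v'‖²_{H₀(β⁺)} − ‖v^k − v'‖²_{H₀(β)}.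 -/
/-!
Write `u = xᵏ⁺¹ - x'` and `d = xᵏ - xᵏ⁺¹`. Since `A x' = b`, the multiplier updates are
`λᵏ⁺¹ - λ = (λᵏ - λ) - γβ A u` and `λᵏ - λ̃ = β A u`. The multiplier blocks of `β H` and of `H₀`
are both `(1/γ) I`, so all multiplier terms cancel except `(2 - γ) β² ‖A u‖²` coming from `G`,
and the difference of the two sides becomes a quadratic expression in `u` and `d`. It is a sum of
five nonnegative terms, which account for the hypotheses one by one: the growth condition on `β`;
`β ≤ β⁺` together with `2τ ≥ 1`; `‖A d‖² ≤ 2‖A (d + u)‖² + 2‖A u‖²` weighted by `1 - τ`;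
`4τ ≥ 2 + γ`; and `‖A d‖² ≤ r ‖d‖²`, which holds because `r` exceeds every eigenvalue of `AᵀA`.
-/

open Matrix

/-- `maxEig B` is the largest eigenvalue of `B` (for a symmetric matrix, the
supremum of its eigenvalue set), denoted `σ_max(B)` in the paper. -/
noncomputable def maxEig {m : Type*} [Fintype m] (B : Matrix m m ℝ) : ℝ :=
  sSup {μ : ℝ | ∃ v : m → ℝ, v ≠ 0 ∧ B.mulVec v = μ • v}

section QuadraticForm

variable {m k : Type*} [Fintype m] [Fintype k]

lemma qf_add (P Q : Matrix m m ℝ) (w : m → ℝ) : qf (P + Q) w = qf P w + qf Q w := by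
  simp only [qf, add_mulVec, dotProduct_add]

lemma qf_sub (P Q : Matrix m m ℝ) (w : m → ℝ) : qf (P - Q) w = qf P w - qf Q w := by
  simp only [qf, sub_mulVec, dotProduct_sub]

lemma qf_smul (c : ℝ) (P : Matrix m m ℝ) (w : m → ℝ) : qf (c • P) w = c * qf P w := by
  simp only [qf, smul_mulVec, dotProduct_smul, smul_eq_mul]

lemma qf_one [DecidableEq m] (w : m → ℝ) : qf 1 w = w ⬝ᵥ w := by
  simp only [qf, one_mulVec]

lemma qf_transpose_mul_self (A : Matrix k m ℝ) (w : m → ℝ) :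
    qf (Aᵀ * A) w = A *ᵥ w ⬝ᵥ A *ᵥ w := by
  rw [qf, ← mulVec_mulVec, dotProduct_mulVec, vecMul_transpose]

lemma qf_fromBlocks_zero (P : Matrix m m ℝ) (Q : Matrix k k ℝ) (z : m → ℝ) (y : k → ℝ) :
    qf (fromBlocks P 0 0 Q) (Sum.elim z y) = qf P z + qf Q y := by
  simp only [qf, fromBlocks_mulVec, zero_mulVec, add_zero, zero_add, Sum.elim_comp_inl,
    Sum.elim_comp_inr, sumElim_dotProduct_sumElim]

end QuadraticForm

lemma dotProduct_self_nonneg {m : Type*} [Fintype m] (v : m → ℝ) : 0 ≤ v ⬝ᵥ v :=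
  Finset.sum_nonneg fun i _ => mul_self_nonneg (v i)

lemma dotProduct_sub_self_le {m : Type*} [Fintype m] (x y : m → ℝ) :
    (x - y) ⬝ᵥ (x - y) ≤ 2 * (x ⬝ᵥ x) + 2 * (y ⬝ᵥ y) := by
  simp only [dotProduct, Finset.mul_sum, ← Finset.sum_add_distrib]
  gcongr with i
  simp only [Pi.sub_apply]
  nlinarith [sq_nonneg (x i + y i)]

section MaxEigenvalue

variable {m : Type*} [Fintype m] [DecidableEq m]

lemma Matrix.mem_spectrum_iff_exists_mulVec_eq_smul {K : Type*} [Field K] (B : Matrix m m K)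
    (μ : K) : μ ∈ spectrum K B ↔ ∃ v, v ≠ 0 ∧ B *ᵥ v = μ • v := by
  rw [← spectrum_toLin', ← Module.End.hasEigenvalue_iff_mem_spectrum,
    Module.End.hasEigenvalue_iff, Submodule.ne_bot_iff]
  simp only [Module.End.mem_eigenspace_iff, toLin'_apply, and_comm]

lemma maxEig_eq_sSup_spectrum (B : Matrix m m ℝ) : maxEig B = sSup (spectrum ℝ B) := by
  rw [maxEig]
  congr 1
  ext μ
  exact (B.mem_spectrum_iff_exists_mulVec_eq_smul μ).symm

open scoped MatrixOrder in
lemma qf_le_maxEig_mul {B : Matrix m m ℝ} (hB : B.IsHermitian) (v : m → ℝ) :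
    qf B v ≤ maxEig B * (v ⬝ᵥ v) := by
  have hle : B ≤ algebraMap ℝ _ (maxEig B) := le_algebraMap_of_spectrum_le fun x hx => by
    rw [maxEig_eq_sSup_spectrum]
    exact le_csSup B.finite_real_spectrum.bddAbove hx
  have := (le_iff.mp hle).dotProduct_mulVec_nonneg v
  simpa [qf, Algebra.algebraMap_eq_smul_one, sub_mulVec, dotProduct_sub, smul_mulVec] using this

end MaxEigenvalue

lemma dotProduct_mulVec_self_le_of_maxEig_lt {m k : Type*} [Fintype m] [DecidableEq m]
    [Fintype k] {A : Matrix k m ℝ} {r : ℝ} (hr : maxEig (Aᵀ * A) < r) (v : m → ℝ) :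
    A *ᵥ v ⬝ᵥ A *ᵥ v ≤ r * (v ⬝ᵥ v) := by
  have hv := qf_le_maxEig_mul (isHermitian_conjTranspose_mul_self A) v
  rw [conjTranspose_eq_transpose_of_trivial, qf_transpose_mul_self] at hv
  exact hv.trans (mul_le_mul_of_nonneg_right hr.le (dotProduct_self_nonneg v))

lemma gpalm_primal_gap_nonneg {m k : Type*} [Fintype m] [DecidableEq m] [Fintype k]
    (A : Matrix k m ℝ) {γ τ σ r β βp : ℝ} (hγ : 0 ≤ γ) (hτ : (2 + γ) / 4 ≤ τ) (hτ' : τ ≤ 1)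
    (hr : maxEig (Aᵀ * A) < r) (hβ : 0 ≤ β) (hle : β ≤ βp)
    (hgrow : β * (τ * r * β + σ) ≥ τ * r * βp ^ 2) (u d : m → ℝ) :
    0 ≤ (β * (τ * r * β + σ) - τ * r * βp ^ 2) * (u ⬝ᵥ u)
      + ((1 - γ) * β ^ 2 + (2 * τ - 1) * βp ^ 2) * (A *ᵥ u ⬝ᵥ A *ᵥ u)
      + 2 * β ^ 2 * (1 - τ) * (A *ᵥ (d + u) ⬝ᵥ A *ᵥ (d + u))
      + β ^ 2 * (τ * r * (d ⬝ᵥ d) - A *ᵥ d ⬝ᵥ A *ᵥ d) := by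
  have hβ2 : β ^ 2 ≤ βp ^ 2 := pow_le_pow_left₀ hβ hle 2
  have hAu := dotProduct_self_nonneg (A *ᵥ u)
  have hgap : 0 ≤ (β * (τ * r * β + σ) - τ * r * βp ^ 2) * (u ⬝ᵥ u) :=
    mul_nonneg (by linarith) (dotProduct_self_nonneg u)
  have hstep : 0 ≤ (βp ^ 2 - β ^ 2) * (2 * τ - 1) * (A *ᵥ u ⬝ᵥ A *ᵥ u) :=
    mul_nonneg (mul_nonneg (by linarith) (by linarith)) hAu
  have hτγ : 0 ≤ β ^ 2 * (4 * τ - 2 - γ) * (A *ᵥ u ⬝ᵥ A *ᵥ u) :=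
    mul_nonneg (mul_nonneg (sq_nonneg β) (by linarith)) hAu
  have hpar : 0 ≤ β ^ 2 * (1 - τ) * (2 * (A *ᵥ (d + u) ⬝ᵥ A *ᵥ (d + u))
      + 2 * (A *ᵥ u ⬝ᵥ A *ᵥ u) - A *ᵥ d ⬝ᵥ A *ᵥ d) := by
    have hAd := dotProduct_sub_self_le (A *ᵥ (d + u)) (A *ᵥ u)
    rw [← mulVec_sub, add_sub_cancel_right] at hAd
    exact mul_nonneg (mul_nonneg (sq_nonneg β) (by linarith)) (by linarith)
  have hray : 0 ≤ β ^ 2 * τ * (r * (d ⬝ᵥ d) - A *ᵥ d ⬝ᵥ A *ᵥ d) := by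
    have hAd := dotProduct_mulVec_self_le_of_maxEig_lt hr d
    exact mul_nonneg (mul_nonneg (sq_nonneg β) (by linarith)) (by linarith)
  linarith

theorem stmt6_general {n l : ℕ}
    (A : Matrix (Fin l) (Fin n) ℝ) (b : Fin l → ℝ)
    (γ τ σ r : ℝ) (hγ : γ ∈ Set.Ioc (0 : ℝ) 2)
    (hτ : τ ∈ Set.Icc ((2 + γ) / 4) 1)
    (hr : maxEig (Aᵀ * A) < r)
    (β βp : ℝ) (hβ : 0 < β) (hle : β ≤ βp)
    (hgrow : β * (τ * r * β + σ) ≥ τ * r * βp ^ 2)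
    (x' xk xkk : Fin n → ℝ) (hx' : A.mulVec x' = b)
    (lam lamk lamt lamkk : Fin l → ℝ)
    (hlamt : lamt = lamk - β • (A.mulVec xkk - b))
    (hlamkk : lamkk = lamk - (γ * β) • (A.mulVec xkk - b))
    (D : Matrix (Fin n) (Fin n) ℝ)
    (hD : D = (τ * r * β) • 1 - β • (Aᵀ * A))
    (H G : Matrix (Fin n ⊕ Fin l) (Fin n ⊕ Fin l) ℝ)
    (hH : H = Matrix.fromBlocks D 0 0 ((1 / (γ * β)) • 1))
    (hG : G = Matrix.fromBlocks D 0 0 (((2 - γ) / β) • 1))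
    (H₀ : ℝ → Matrix (Fin n ⊕ Fin l) (Fin n ⊕ Fin l) ℝ)
    (hH₀ : ∀ s, H₀ s =
      Matrix.fromBlocks (s ^ 2 • ((τ * r) • 1 + (1 - 2 * τ) • (Aᵀ * A))) 0 0 ((1 / γ) • 1)) :
    β * (qf H (Sum.elim xkk lamkk - Sum.elim x' lam)
        + σ * ((xkk - x') ⬝ᵥ (xkk - x'))
        - qf H (Sum.elim xk lamk - Sum.elim x' lam)
        + qf G (Sum.elim xk lamk - Sum.elim xkk lamt))
      ≥ qf (H₀ βp) (Sum.elim xkk lamkk - Sum.elim x' lam)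
        - qf (H₀ β) (Sum.elim xk lamk - Sum.elim x' lam) := by
  obtain ⟨hγ, -⟩ := hγ
  obtain ⟨hτ, hτ'⟩ := hτ
  have hres : A *ᵥ xkk - b = A *ᵥ (xkk - x') := by rw [mulVec_sub, hx']
  have hxk : xk - x' = (xk - xkk) + (xkk - x') := (sub_add_sub_cancel xk xkk x').symm
  rw [← Sum.elim_sub_sub, ← Sum.elim_sub_sub, ← Sum.elim_sub_sub, hxk, hlamkk, hlamt, hres,
    sub_right_comm, sub_sub_cancel, hH₀, hH₀]
  subst hH hG hD
  simp only [qf_fromBlocks_zero, qf_add, qf_sub, qf_smul, qf_one, qf_transpose_mul_self,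
    dotProduct_smul, smul_dotProduct, smul_eq_mul]
  rw [ge_iff_le, ← sub_nonneg]
  refine (gpalm_primal_gap_nonneg A hγ.le hτ hτ' hr hβ.le hle hgrow
    (xkk - x') (xk - xkk)).trans_eq ?_
  field_simp [hβ.ne', hγ.ne']
  ring

/-- Theorem 3.2: one step of GPALM with the possibly indefinite proximal matrix
`D = τrβI - βAᵀA` applied to a `σ`-strongly convex objective satisfies the
additional convergence condition (CC3) with `rᵏ = β`, `Θᵏ = 0` and
`H₀(s) = blockdiag(s²(τrI + (1-2τ)AᵀA), (1/γ)I)`, provided `β(τrβ+σ) ≥ τr(β⁺)²`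
and `β ≤ β⁺`. -/
theorem stmt6 {n l : ℕ}
    (A : Matrix (Fin l) (Fin n) ℝ) (b : Fin l → ℝ)
    (γ τ σ r : ℝ) (hγ : γ ∈ Set.Ioc (0 : ℝ) 2)
    (hτ : τ ∈ Set.Icc ((2 + γ) / 4) 1) (hσ : 0 < σ)
    (hr : maxEig (Aᵀ * A) < r)
    (β βp : ℝ) (hβ : 0 < β) (hβp : 0 < βp) (hle : β ≤ βp)
    (hgrow : β * (τ * r * β + σ) ≥ τ * r * βp ^ 2)
    (x' xk xkk : Fin n → ℝ) (hx' : A.mulVec x' = b)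
    (lam lamk lamt lamkk : Fin l → ℝ)
    (hlamt : lamt = lamk - β • (A.mulVec xkk - b))
    (hlamkk : lamkk = lamk - (γ * β) • (A.mulVec xkk - b))
    (D : Matrix (Fin n) (Fin n) ℝ)
    (hD : D = (τ * r * β) • 1 - β • (Aᵀ * A))
    (H G : Matrix (Fin n ⊕ Fin l) (Fin n ⊕ Fin l) ℝ)
    (hH : H = Matrix.fromBlocks D 0 0 ((1 / (γ * β)) • 1))
    (hG : G = Matrix.fromBlocks D 0 0 (((2 - γ) / β) • 1))
    (H₀ : ℝ → Matrix (Fin n ⊕ Fin l) (Fin n ⊕ Fin l) ℝ)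
    (hH₀ : ∀ s, H₀ s =
      Matrix.fromBlocks (s ^ 2 • ((τ * r) • 1 + (1 - 2 * τ) • (Aᵀ * A))) 0 0 ((1 / γ) • 1)) :
    β * (qf H (Sum.elim xkk lamkk - Sum.elim x' lam)
        + σ * ((xkk - x') ⬝ᵥ (xkk - x'))
        - qf H (Sum.elim xk lamk - Sum.elim x' lam)
        + qf G (Sum.elim xk lamk - Sum.elim xkk lamt))
      ≥ qf (H₀ βp) (Sum.elim xkk lamkk - Sum.elim x' lam)
        - qf (H₀ β) (Sum.elim xk lamk - Sum.elim x' lam) :=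
  stmt6_general A b γ τ σ r hγ hτ hr β βp hβ hle hgrow x' xk xkk hx' lam lamk lamt lamkk hlamt
    hlamkk D hD H G hH hG H₀ hH₀
end

section
/- Let f₂ : ℝ^{n₂} → ℝ, σ ≥ 0, A₁ ∈ ℝ^{l×n₁}, A₂ ∈ ℝ^{l×n₂} with A₂ ≠ 0, b ∈ ℝ^l, γ ∈ ℝ, and β, β⁻ > 0. Let x₁^k, x₁^{k+1} ∈ ℝ^{n₁}, x₂^k, x₂^{k+1} ∈ ℝ^{n₂}, λ^{k−1}, λ^k ∈ ℝ^l, and write e₀ := A₁x₁^k + A₂x₂^k − b, e := A₁x₁^{k+1} + A₂x₂^{k+1} − b, Δ := x₂^k − x₂^{k+1}. Assume: (i) for all x₂ ∈ ℝ^{n₂}: f₂(x₂) − f₂(x₂^{k+1}) + (x₂ − x₂^{k+1})ᵀ[ −A₂ᵀλ^k + β A₂ᵀ e ] ≥ (σ/2)‖x₂^{k+1} − x₂‖²; (ii) for all x₂ ∈ ℝ^{n₂}: f₂(x₂) − f₂(x₂^k) + (x₂ − x₂^k)ᵀ[ −A₂ᵀλ^{k−1} + β⁻ A₂ᵀ e₀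 ] ≥ (σ/2)‖x₂^k − x₂‖²; (iii) λ^k = λ^{k−1} − γ β⁻ e₀. Then β Δᵀ A₂ᵀ e ≥ (1 − γ) β⁻ Δᵀ A₂ᵀ e₀ + ( σ / σ_max(A₂ᵀA₂) ) ‖A₂ Δ‖². -/
/-!
Evaluating the `x₂`-optimality inequality of step `k+1` at `x₂ᵏ` and that of step `k` at
`x₂^{k+1}` and adding them, the `f₂` terms cancel: this is the `σ`-strong monotonicity of
`∂f₂`, and with the dual update it yields the claim with `σ‖Δ‖²` in place of the last term.
Since `σ_max(A₂ᵀA₂)` dominates the spectrum of `A₂ᵀA₂`, the matrix `σ_max(A₂ᵀA₂) • 1 - A₂ᵀA₂`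
is positive semidefinite, i.e. `‖A₂Δ‖² ≤ σ_max(A₂ᵀA₂) ‖Δ‖²`.
-/

open Matrix

open scoped MatrixOrder

namespace Matrix

variable {m n l : Type*} [Fintype m] [DecidableEq m] [Fintype n] [Fintype l]

theorem mem_spectrum_iff_exists_mulVec_eq_smul_s11 {K : Type*} [Field K] {B : Matrix m m K} {μ : K} :
    μ ∈ spectrum K B ↔ ∃ v ≠ 0, B *ᵥ v = μ • v := by
  rw [spectrum.mem_iff, isUnit_iff_isUnit_det, isUnit_iff_ne_zero, not_not,
    ← exists_mulVec_eq_zero_iff]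
  simp only [Algebra.algebraMap_eq_smul_one, sub_mulVec, smul_mulVec, one_mulVec, sub_eq_zero,
    eq_comm]

theorem maxEig_eq_sSup_spectrum (B : Matrix m m ℝ) : maxEig B = sSup (spectrum ℝ B) := by
  rw [maxEig]
  congr 1 with μ
  exact mem_spectrum_iff_exists_mulVec_eq_smul_s11.symm

theorem IsHermitian.dotProduct_mulVec_le_maxEig {B : Matrix m m ℝ} (hB : B.IsHermitian)
    (v : m → ℝ) : v ⬝ᵥ B *ᵥ v ≤ maxEig B * (v ⬝ᵥ v) := by
  have hle : B ≤ algebraMap ℝ _ (maxEig B) := by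
    refine le_algebraMap_of_spectrum_le (fun μ hμ => ?_) hB.isSelfAdjoint
    rw [maxEig_eq_sSup_spectrum]
    exact le_csSup finite_real_spectrum.bddAbove hμ
  have hpsd := (le_iff.mp hle).dotProduct_mulVec_nonneg v
  simp only [star_trivial, Algebra.algebraMap_eq_smul_one, sub_mulVec, smul_mulVec,
    one_mulVec, dotProduct_sub, dotProduct_smul, smul_eq_mul] at hpsd
  linarith

theorem dotProduct_mulVec_self_le_maxEig [DecidableEq n] (A : Matrix l n ℝ) (v : n → ℝ) :
    A *ᵥ v ⬝ᵥ A *ᵥ v ≤ maxEig (Aᵀ * A) * (v ⬝ᵥ v) := by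
  have hA : (Aᵀ * A).IsHermitian := by
    simpa [conjTranspose_eq_transpose_of_trivial] using isHermitian_conjTranspose_mul_self A
  simpa [← mulVec_mulVec, dotProduct_mulVec, vecMul_transpose] using
    hA.dotProduct_mulVec_le_maxEig v

theorem div_maxEig_mul_dotProduct_mulVec_self_le [DecidableEq n] (A : Matrix l n ℝ) (v : n → ℝ)
    {σ : ℝ} (hσ : 0 ≤ σ) :
    σ / maxEig (Aᵀ * A) * (A *ᵥ v ⬝ᵥ A *ᵥ v) ≤ σ * (v ⬝ᵥ v) := by
  rcases le_or_gt (maxEig (Aᵀ * A)) 0 with hM | hM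
  · calc σ / maxEig (Aᵀ * A) * (A *ᵥ v ⬝ᵥ A *ᵥ v) ≤ 0 :=
          mul_nonpos_of_nonpos_of_nonneg (div_nonpos_of_nonneg_of_nonpos hσ hM)
            (by simpa using dotProduct_self_star_nonneg (A *ᵥ v))
      _ ≤ σ * (v ⬝ᵥ v) := mul_nonneg hσ (by simpa using dotProduct_self_star_nonneg v)
  · calc σ / maxEig (Aᵀ * A) * (A *ᵥ v ⬝ᵥ A *ᵥ v)
        ≤ σ / maxEig (Aᵀ * A) * (maxEig (Aᵀ * A) * (v ⬝ᵥ v)) :=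
          mul_le_mul_of_nonneg_left (dotProduct_mulVec_self_le_maxEig A v) (by positivity)
      _ = σ * (v ⬝ᵥ v) := by field_simp

end Matrix

theorem mul_dotProduct_self_le_of_optimality {ι : Type*} [Fintype ι] {f : (ι → ℝ) → ℝ} {σ : ℝ}
    {x y g h : ι → ℝ}
    (hx : ∀ z, f z - f x + (z - x) ⬝ᵥ g ≥ σ / 2 * ((x - z) ⬝ᵥ (x - z)))
    (hy : ∀ z, f z - f y + (z - y) ⬝ᵥ h ≥ σ / 2 * ((y - z) ⬝ᵥ (y - z))) :
    σ * ((y - x) ⬝ᵥ (y - x)) ≤ (y - x) ⬝ᵥ (g - h) := by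
  have hxy := hx y
  have hyx := hy x
  rw [← neg_sub y x, neg_dotProduct_neg] at hxy
  rw [← neg_sub y x, neg_dotProduct] at hyx
  rw [dotProduct_sub (y - x) g h]
  linarith

theorem stmt11_general {n₂ l : ℕ}
    (f₂ : (Fin n₂ → ℝ) → ℝ) (σ : ℝ) (hσ : 0 ≤ σ)
    (A₂ : Matrix (Fin l) (Fin n₂) ℝ)
    (γ β βm : ℝ)
    (x2k x2kk : Fin n₂ → ℝ)
    (lamkm lamk : Fin l → ℝ)
    (e₀ e : Fin l → ℝ)
    (hi : ∀ x₂ : Fin n₂ → ℝ,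
      f₂ x₂ - f₂ x2kk + (x₂ - x2kk) ⬝ᵥ (-(A₂ᵀ.mulVec lamk) + β • A₂ᵀ.mulVec e)
        ≥ σ / 2 * ((x2kk - x₂) ⬝ᵥ (x2kk - x₂)))
    (hii : ∀ x₂ : Fin n₂ → ℝ,
      f₂ x₂ - f₂ x2k + (x₂ - x2k) ⬝ᵥ (-(A₂ᵀ.mulVec lamkm) + βm • A₂ᵀ.mulVec e₀)
        ≥ σ / 2 * ((x2k - x₂) ⬝ᵥ (x2k - x₂)))
    (hiii : lamk = lamkm - (γ * βm) • e₀) :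
    β * ((x2k - x2kk) ⬝ᵥ A₂ᵀ.mulVec e)
      ≥ (1 - γ) * βm * ((x2k - x2kk) ⬝ᵥ A₂ᵀ.mulVec e₀)
        + (σ / maxEig (A₂ᵀ * A₂)) *
            (A₂.mulVec (x2k - x2kk) ⬝ᵥ A₂.mulVec (x2k - x2kk)) := by
  have hmono := mul_dotProduct_self_le_of_optimality hi hii
  have hdual : (x2k - x2kk) ⬝ᵥ ((-(A₂ᵀ *ᵥ lamk) + β • A₂ᵀ *ᵥ e)
      - (-(A₂ᵀ *ᵥ lamkm) + βm • A₂ᵀ *ᵥ e₀))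
      = β * ((x2k - x2kk) ⬝ᵥ A₂ᵀ *ᵥ e) - (1 - γ) * βm * ((x2k - x2kk) ⬝ᵥ A₂ᵀ *ᵥ e₀) := by
    simp only [hiii, mulVec_sub, mulVec_smul, dotProduct_sub, dotProduct_add, dotProduct_neg,
      dotProduct_smul, smul_eq_mul]
    ring
  linarith [div_maxEig_mul_dotProduct_mulVec_self_le A₂ (x2k - x2kk) hσ]

/-- Inequality (3.26) for ADMM on the two-block problem (P2): from the
first-order optimality inequalities of the `x₂`-subproblem at two consecutive
iterations and the dual update `λᵏ = λ^{k-1} - γβ⁻e₀`, one gets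
`βΔᵀA₂ᵀe ≥ (1-γ)β⁻ΔᵀA₂ᵀe₀ + (σ/σ_max(A₂ᵀA₂))‖A₂Δ‖²` where `Δ = x₂ᵏ - x₂^{k+1}`. -/
theorem stmt11 {n₁ n₂ l : ℕ}
    (f₂ : (Fin n₂ → ℝ) → ℝ) (σ : ℝ) (hσ : 0 ≤ σ)
    (A₁ : Matrix (Fin l) (Fin n₁) ℝ) (A₂ : Matrix (Fin l) (Fin n₂) ℝ)
    (hA₂ : A₂ ≠ 0) (b : Fin l → ℝ)
    (γ β βm : ℝ) (hβ : 0 < β) (hβm : 0 < βm)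
    (x1k x1kk : Fin n₁ → ℝ) (x2k x2kk : Fin n₂ → ℝ)
    (lamkm lamk : Fin l → ℝ)
    (e₀ e : Fin l → ℝ)
    (he₀ : e₀ = A₁.mulVec x1k + A₂.mulVec x2k - b)
    (he : e = A₁.mulVec x1kk + A₂.mulVec x2kk - b)
    (hi : ∀ x₂ : Fin n₂ → ℝ,
      f₂ x₂ - f₂ x2kk + (x₂ - x2kk) ⬝ᵥ (-(A₂ᵀ.mulVec lamk) + β • A₂ᵀ.mulVec e)
        ≥ σ / 2 * ((x2kk - x₂) ⬝ᵥ (x2kk - x₂)))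
    (hii : ∀ x₂ : Fin n₂ → ℝ,
      f₂ x₂ - f₂ x2k + (x₂ - x2k) ⬝ᵥ (-(A₂ᵀ.mulVec lamkm) + βm • A₂ᵀ.mulVec e₀)
        ≥ σ / 2 * ((x2k - x₂) ⬝ᵥ (x2k - x₂)))
    (hiii : lamk = lamkm - (γ * βm) • e₀) :
    β * ((x2k - x2kk) ⬝ᵥ A₂ᵀ.mulVec e)
      ≥ (1 - γ) * βm * ((x2k - x2kk) ⬝ᵥ A₂ᵀ.mulVec e₀)
        + (σ / maxEig (A₂ᵀ * A₂)) *
            (A₂.mulVec (x2k - x2kk) ⬝ᵥ A₂.mulVec (x2k - x2kk)) :=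
  stmt11_general f₂ σ hσ A₂ γ β βm x2k x2kk lamkm lamk e₀ e hi hii hiii
end

section
/- Let m ≥ 2 and l ≥ 1. Let J ∈ ℝ^{(m−1)l×(m−1)l} be the lower block-triangular matrix whose (i, j)-th l×l block equals I_l when i ≥ j and 0 when i < j (1 ≤ i, j ≤ m−1), and let Ĩ := (I_l, I_l, …, I_l) ∈ ℝ^{l×(m−1)l}. Then: (i) Jᵀ + J = I_{(m−1)l} + Ĩᵀ Ĩ; (ii) for any β > 0 and γ ∈ (0, 1], with Q := [ β J, 0 ; −Ĩ, (1/β) I_l ] and N := γ [ √β I_{(m−1)l}, 0 ; −√β Ĩ, (1/√β) I_l ], one has Qᵀ + Q − (1/γ²) Nᵀ N = blockdiag(0_{(m−1)l}, (1/β) I_l), and the matrix G := Qᵀ + Q − (1/γ) Nᵀ N is symmetric positive semidefinite. -/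
/-!
Write the paper's `N` as `γ B` with `B = [√β I, 0; -√β Ĩ, (1/√β) I]`. Expanding `BᵀB` and using
`Jᵀ + J = I + ĨᵀĨ` gives `Qᵀ + Q = BᵀB + D` with `D = blockdiag(0, (1/β) I)`, hence
`Qᵀ + Q - c NᵀN = (1 - c γ²) BᵀB + D` for every scalar `c`. For `c = 1/γ²` the Gram term vanishes,
and for `c = 1/γ` it is `(1 - γ) BᵀB`, a nonnegative multiple of a Gram matrix, so `G` is a sum of
two positive semidefinite matrices.
-/

open Matrix

namespace Matrix

section BlockOnes

variable (ι κ R : Type*) [DecidableEq κ] [Semiring R]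

def blockRowOnes : Matrix κ (ι × κ) R :=
  fun a q => if a = q.2 then 1 else 0

theorem blockRowOnes_transpose_mul_self_apply [Fintype κ] (p q : ι × κ) :
    ((blockRowOnes ι κ R)ᵀ * blockRowOnes ι κ R) p q = if p.2 = q.2 then 1 else 0 := by
  simp [blockRowOnes, mul_apply, eq_comm]

variable [LinearOrder ι]

def blockLowerOnes : Matrix (ι × κ) (ι × κ) R :=
  fun p q => if q.1 ≤ p.1 ∧ p.2 = q.2 then 1 else 0

theorem blockLowerOnes_transpose_add [Fintype κ] :
    (blockLowerOnes ι κ R)ᵀ + blockLowerOnes ι κ R =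
      1 + (blockRowOnes ι κ R)ᵀ * blockRowOnes ι κ R := by
  ext ⟨i, a⟩ ⟨j, b⟩
  simp only [add_apply, transpose_apply, blockLowerOnes, blockRowOnes_transpose_mul_self_apply,
    one_apply, Prod.mk.injEq]
  by_cases hab : a = b
  · subst hab
    rcases lt_trichotomy i j with h | rfl | h
    · simp [h.le, not_le.mpr h, h.ne]
    · simp
    · simp [h.le, not_le.mpr h, h.ne']
  · simp [hab, Ne.symm hab]

end BlockOnes

theorem PosSemidef.fromBlocks_zero_zero_zero_smul_one {m n R : Type*} [Fintype m] [Fintype n]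
    [DecidableEq m] [DecidableEq n] [CommRing R] [PartialOrder R] [StarRing R]
    [StarOrderedRing R] {c : R} (hc : 0 ≤ c) :
    (fromBlocks 0 0 0 (c • 1) : Matrix (m ⊕ n) (m ⊕ n) R).PosSemidef := by
  rw [smul_one_eq_diagonal, ← diagonal_zero, fromBlocks_diagonal]
  exact PosSemidef.diagonal fun i => by cases i <;> simp [hc]

end Matrix

section ADMM

variable {n k : Type*} [Fintype n] [Fintype k] [DecidableEq n] [DecidableEq k]

noncomputable def admmQ (β : ℝ) (J : Matrix n n ℝ) (E : Matrix k n ℝ) :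
    Matrix (n ⊕ k) (n ⊕ k) ℝ :=
  fromBlocks (β • J) 0 (-E) ((1 / β) • 1)

/-- The paper's `N` is `γ • admmN β Ĩ`. -/
noncomputable def admmN (β : ℝ) (E : Matrix k n ℝ) : Matrix (n ⊕ k) (n ⊕ k) ℝ :=
  fromBlocks (√β • 1) 0 (-(√β • E)) ((1 / √β) • 1)

variable {β : ℝ} {J : Matrix n n ℝ} {E : Matrix k n ℝ}

theorem admmQ_transpose_add (hβ : 0 < β) (hJ : Jᵀ + J = 1 + Eᵀ * E) :
    (admmQ β J E)ᵀ + admmQ β J E =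
      (admmN β E)ᵀ * admmN β E + fromBlocks 0 0 0 ((1 / β) • 1) := by
  have hsq : √β * √β = β := Real.mul_self_sqrt hβ.le
  have hsqrt : √β ≠ 0 := by positivity
  have hinv : (√β)⁻¹ * (√β)⁻¹ = β⁻¹ := by rw [← mul_inv, hsq]
  rw [admmQ, admmN, fromBlocks_transpose, fromBlocks_transpose, fromBlocks_add,
    fromBlocks_multiply, fromBlocks_add]
  refine fromBlocks_inj.mpr ⟨?_, ?_, ?_, ?_⟩
  · rw [transpose_smul, ← smul_add, hJ]
    simp [smul_add, Matrix.smul_mul, Matrix.mul_smul, smul_smul, hsq]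
  · simp [Matrix.mul_smul, smul_smul, hsqrt]
  · simp [Matrix.mul_smul, smul_smul, hsqrt]
  · simp [smul_smul, hinv]

theorem admmQ_transpose_add_sub_smul (hβ : 0 < β) (hJ : Jᵀ + J = 1 + Eᵀ * E) (c γ : ℝ) :
    (admmQ β J E)ᵀ + admmQ β J E - c • ((γ • admmN β E)ᵀ * (γ • admmN β E)) =
      (1 - c * γ ^ 2) • ((admmN β E)ᵀ * admmN β E) + fromBlocks 0 0 0 ((1 / β) • 1) := by
  rw [admmQ_transpose_add hβ hJ, transpose_smul, smul_mul_smul_comm, smul_smul, sub_smul,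
    one_smul, sq]
  abel

theorem admm_posSemidef (hβ : 0 < β) (hJ : Jᵀ + J = 1 + Eᵀ * E) {γ : ℝ} (hγ : γ ≤ 1) :
    ((admmQ β J E)ᵀ + admmQ β J E -
      (1 / γ) • ((γ • admmN β E)ᵀ * (γ • admmN β E))).PosSemidef := by
  have hcoeff : 1 - 1 / γ * γ ^ 2 = 1 - γ := by field_simp
  rw [admmQ_transpose_add_sub_smul hβ hJ, hcoeff]
  have hgram : ((admmN β E)ᵀ * admmN β E).PosSemidef := by
    simpa using posSemidef_conjTranspose_mul_self (admmN β E)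
  exact (hgram.smul (sub_nonneg.mpr hγ)).add
    (PosSemidef.fromBlocks_zero_zero_zero_smul_one (by positivity))

end ADMM

theorem stmt17_general (m l : ℕ)
    (J : Matrix (Fin (m - 1) × Fin l) (Fin (m - 1) × Fin l) ℝ)
    (hJ : ∀ p q, J p q = if q.1 ≤ p.1 ∧ p.2 = q.2 then 1 else 0)
    (Itil : Matrix (Fin l) (Fin (m - 1) × Fin l) ℝ)
    (hItil : ∀ a q, Itil a q = if a = q.2 then 1 else 0) :
    (Jᵀ + J = 1 + Itilᵀ * Itil) ∧
    (∀ β γ : ℝ, 0 < β → γ ∈ Set.Ioc (0 : ℝ) 1 →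
      ∀ Q N : Matrix ((Fin (m - 1) × Fin l) ⊕ Fin l) ((Fin (m - 1) × Fin l) ⊕ Fin l) ℝ,
        Q = Matrix.fromBlocks (β • J) 0 (-Itil) ((1 / β) • 1) →
        N = γ • Matrix.fromBlocks (Real.sqrt β • 1) 0 (-(Real.sqrt β • Itil))
              ((1 / Real.sqrt β) • 1) →
        (Qᵀ + Q - (1 / γ ^ 2) • (Nᵀ * N)
            = Matrix.fromBlocks 0 0 0 ((1 / β) • 1)) ∧
        (Qᵀ + Q - (1 / γ) • (Nᵀ * N)).PosSemidef) := by
  obtain rfl : J = blockLowerOnes _ _ _ := Matrix.ext hJ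
  obtain rfl : Itil = blockRowOnes _ _ _ := Matrix.ext hItil
  have hJI := blockLowerOnes_transpose_add (Fin (m - 1)) (Fin l) ℝ
  refine ⟨hJI, fun β γ hβ ⟨hγ0, hγ1⟩ Q N hQ hN => ?_⟩
  subst hQ hN
  refine ⟨?_, admm_posSemidef hβ hJI hγ1⟩
  have hcoeff : 1 - 1 / γ ^ 2 * γ ^ 2 = 0 := by field_simp; ring
  rw [← admmQ, ← admmN, admmQ_transpose_add_sub_smul hβ hJI, hcoeff, zero_smul, zero_add]

/-- The block matrices (2.4)/(3.44) of the multi-block ADMM-type method: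
with `J` the lower block-triangular matrix of identity blocks and
`Ĩ = (I_l, …, I_l)`, one has (i) `Jᵀ + J = I + ĨᵀĨ`, and (ii) for `β > 0`,
`γ ∈ (0,1]`, `Q = [βJ, 0; -Ĩ, (1/β)I]`, `N = γ[√βI, 0; -√βĨ, (1/√β)I]`:
`Qᵀ + Q - (1/γ²)NᵀN = blockdiag(0, (1/β)I)` and
`G = Qᵀ + Q - (1/γ)NᵀN` is positive semidefinite. -/
theorem stmt17 (m l : ℕ) (hm : 2 ≤ m) (hl : 1 ≤ l)
    (J : Matrix (Fin (m - 1) × Fin l) (Fin (m - 1) × Fin l) ℝ)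
    (hJ : ∀ p q, J p q = if q.1 ≤ p.1 ∧ p.2 = q.2 then 1 else 0)
    (Itil : Matrix (Fin l) (Fin (m - 1) × Fin l) ℝ)
    (hItil : ∀ a q, Itil a q = if a = q.2 then 1 else 0) :
    (Jᵀ + J = 1 + Itilᵀ * Itil) ∧
    (∀ β γ : ℝ, 0 < β → γ ∈ Set.Ioc (0 : ℝ) 1 →
      ∀ Q N : Matrix ((Fin (m - 1) × Fin l) ⊕ Fin l) ((Fin (m - 1) × Fin l) ⊕ Fin l) ℝ,
        Q = Matrix.fromBlocks (β • J) 0 (-Itil) ((1 / β) • 1) →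
        N = γ • Matrix.fromBlocks (Real.sqrt β • 1) 0 (-(Real.sqrt β • Itil))
              ((1 / Real.sqrt β) • 1) →
        (Qᵀ + Q - (1 / γ ^ 2) • (Nᵀ * N)
            = Matrix.fromBlocks 0 0 0 ((1 / β) • 1)) ∧
        (Qᵀ + Q - (1 / γ) • (Nᵀ * N)).PosSemidef) :=
  stmt17_general m l J hJ Itil hItil
end
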